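/- Let n ≥ 6 and let G be the bipartite point–cube incidence graph whose parts are the points of F_q^n and the cubes (3-dimensional affine subspaces) of F_q^n, with an edge between a point x and a cube C exactly when x ∈ C. Then the second largest normalized singular value of G is at most 2·q^{−3/2}. -/

import Mathlib

attribute [local instance] Classical.propDecidable

instance affineSubspace_finite {F : Type} [Field F] [Fintype F] {n : ℕ} :
    Finite (AffineSubspace F (Fin n → F)) :=
  Finite.of_injective (fun C => (C : Set (Fin n → F))) SetLike.coe_injective

/-- The second largest normalized singular value of a bi-regular bipartite incidence graph with
parts `A`, `B` and incidence relation `E`: the normalized adjacency matrix `M` (with entries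
`1/√(deg a · deg b)` on edges, which is `1/√(d_A·d_B)` for a bi-regular graph) has top singular
value `1` attained on the normalized all-ones vectors, so the second largest singular value is
the operator norm of `M` minus its top rank-one component, whose entries are all
`1/√(|A|·|B|)`. -/
noncomputable def lambdaInc (A B : Type) [Fintype A] [Fintype B] (E : A → B → Prop) : ℝ :=
  ‖LinearMap.toContinuousLinearMap (Matrix.toEuclideanLin
    (Matrix.of fun (a : A) (b : B) =>
      (if E a b then
        1 / Real.sqrt ((Nat.card {b' : B // E a b'} : ℝ) * (Nat.card {a' : A // E a' b} : ℝ))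
      else 0) - 1 / Real.sqrt ((Fintype.card A : ℝ) * (Fintype.card B : ℝ))))‖

/-- A cube: a 3-dimensional affine subspace of `F^n`. -/
def IsCube (F : Type) [Field F] [Fintype F] (n : ℕ) (C : AffineSubspace F (Fin n → F)) : Prop :=
  (C : Set (Fin n → F)).Nonempty ∧ Module.finrank F C.direction = 3

noncomputable instance {F : Type} [Field F] [Fintype F] {n : ℕ} :
    Fintype {C : AffineSubspace F (Fin n → F) // IsCube F n C} :=
  Fintype.ofFinite _

/-!
Points and cubes of `F_q^n` form a 2-design: affine automorphisms map cubes to cubes and act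
transitively on ordered pairs of distinct points, so every point lies on the same number `r` of
cubes and every two distinct points on the same number `c`, while every cube has `k = q^3`
points. For any 2-design on `v` points, double counting gives `r k + c = v c + r`, and with it
the normalized incidence matrix minus its top rank-one part, `N`, satisfies
`N Nᵀ = (r - c)/(r k) · (I - J/v)`. As `I - J/v` is an orthogonal projection,
`‖N‖² ≤ (r - c)/(r k) ≤ 1/k`, so the second singular value is at most `q^{-3/2}`.
-/

open Finset Matrix
open scoped Matrix.Norms.L2Operator

section OperatorNorm

variable {ι κ : Type} [Fintype ι] [Fintype κ]

lemma isStarProjection_inv_card_smul_allOnes :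
    IsStarProjection ((Fintype.card ι : ℝ)⁻¹ • of fun _ _ : ι => (1 : ℝ)) := by
  refine ⟨?_, ?_⟩
  · ext i j
    rcases eq_or_ne (Fintype.card ι : ℝ) 0 with h | h <;> simp [mul_apply, h]
  · ext i j
    simp

lemma norm_mul_self_le_of_mul_conjTranspose_eq_smul [DecidableEq ι] [DecidableEq κ]
    {N : Matrix ι κ ℝ} {μ : ℝ} {p : Matrix ι ι ℝ} (hp : IsStarProjection p) (hμ : 0 ≤ μ)
    (h : N * Nᴴ = μ • p) :
    ‖N‖ * ‖N‖ ≤ μ := by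
  have hC := l2_opNorm_conjTranspose_mul_self Nᴴ
  rw [conjTranspose_conjTranspose, l2_opNorm_conjTranspose, h, norm_smul,
    Real.norm_of_nonneg hμ] at hC
  rw [← hC]
  exact mul_le_of_le_one_right hμ hp.norm_le

end OperatorNorm

section Design

variable {A B : Type}

structure IsTwoDesign (E : A → B → Prop) (r k c : ℕ) : Prop where
  card_blocks_through (a : A) : Nat.card {b // E a b} = r
  card_points_on (b : B) : Nat.card {a // E a b} = k
  card_blocks_through_pair {a a' : A} : a ≠ a' → Nat.card {b // E a b ∧ E a' b} = c

lemma IsTwoDesign.pairCount_le_replication [Finite B] {E : A → B → Prop} {r k c : ℕ}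
    (h : IsTwoDesign E r k c) {a a' : A} (ha : a ≠ a') : c ≤ r := by
  rw [← h.card_blocks_through_pair ha, ← h.card_blocks_through a]
  exact Nat.card_le_card_of_injective (fun b => ⟨b.1, b.2.1⟩) fun _ _ hbb =>
    Subtype.ext (Subtype.mk.inj hbb)

noncomputable def shiftedIncidence (E : A → B → Prop) (α β : ℝ) : Matrix A B ℝ :=
  of fun a b => (if E a b then α else 0) - β

lemma shiftedIncidence_mul_conjTranspose_apply [Fintype B] (E : A → B → Prop) (α β : ℝ)
    (x y : A) :
    (shiftedIncidence E α β * (shiftedIncidence E α β)ᴴ) x y =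
      α ^ 2 * Nat.card {b // E x b ∧ E y b}
        - α * β * (Nat.card {b // E x b} + Nat.card {b // E y b}) + β ^ 2 * Fintype.card B := by
  have hexpand (b : B) : ((if E x b then α else 0) - β) * ((if E y b then α else 0) - β) =
      (if E x b ∧ E y b then α ^ 2 else 0) - (if E x b then α * β else 0)
        - (if E y b then α * β else 0) + β ^ 2 := by
    by_cases hx : E x b <;> by_cases hy : E y b <;> simp [hx, hy] <;> ring
  simp only [shiftedIncidence, mul_apply, conjTranspose_apply, of_apply, star_trivial, hexpand,
    sum_add_distrib, sum_sub_distrib, sum_ite, sum_const_zero, add_zero, sum_const, card_univ,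
    nsmul_eq_mul, Nat.card_eq_fintype_card, Fintype.card_subtype]
  ring

variable [Fintype A] [Fintype B]

lemma sum_natCard_comm (P : A → B → Prop) :
    ∑ a, Nat.card {b // P a b} = ∑ b, Nat.card {a // P a b} := by
  simpa [Nat.card_eq_fintype_card, Fintype.card_subtype, bipartiteAbove, bipartiteBelow] using
    sum_card_bipartiteAbove_eq_sum_card_bipartiteBelow (s := univ) (t := univ) P

namespace IsTwoDesign

variable {E : A → B → Prop} {r k c : ℕ}

lemma card_mul_eq_card_mul (h : IsTwoDesign E r k c) :
    Fintype.card B * k = Fintype.card A * r := by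
  have hcount := sum_natCard_comm E
  simp only [h.card_blocks_through, h.card_points_on, sum_const, card_univ, smul_eq_mul] at hcount
  exact hcount.symm

lemma mul_add_eq_card_mul_add [Nonempty A] (h : IsTwoDesign E r k c) :
    r * k + c = Fintype.card A * c + r := by
  obtain ⟨a₀⟩ := ‹Nonempty A›
  have hcount := sum_natCard_comm fun a (b : {b // E a₀ b}) => E a b.1
  simp only [h.card_points_on, sum_const, card_univ, smul_eq_mul, ← Nat.card_eq_fintype_card,
    h.card_blocks_through] at hcount
  have hpair (a : A) :
      Nat.card {b : {b // E a₀ b} // E a b} = if a = a₀ then r else c := by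
    rw [Nat.card_congr (Equiv.subtypeSubtypeEquivSubtypeInter _ _)]
    split_ifs with ha
    · simp only [ha, and_self, h.card_blocks_through]
    · exact h.card_blocks_through_pair (Ne.symm ha)
  have hself : #{a | a = a₀} = 1 := card_eq_one.2 ⟨a₀, by ext; simp⟩
  have hsplit := card_filter_add_card_filter_not (s := univ) (· = a₀)
  simp only [hpair, sum_ite, sum_const, hself, smul_eq_mul] at hcount
  rw [← card_univ, ← hsplit, hself]
  linarith

lemma lambdaInc_eq_norm_shiftedIncidence (h : IsTwoDesign E r k c) :
    lambdaInc A B E =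
      ‖shiftedIncidence E (1 / √(r * k)) (1 / √(Fintype.card A * Fintype.card B))‖ := by
  rw [lambdaInc, l2_opNorm_def, LinearEquiv.trans_apply]
  congr 3
  ext a b
  rw [of_apply, h.card_blocks_through, h.card_points_on]
  rfl

lemma shiftedIncidence_mul_conjTranspose [Nonempty A] (h : IsTwoDesign E r k c) (hr : 0 < r)
    (hk : 0 < k) {α β : ℝ} (hα : α ^ 2 * (r * k) = 1)
    (hαβ : α * β * (Fintype.card A * r) = 1) (hβ : β ^ 2 * (Fintype.card A * Fintype.card B) = 1) :
    shiftedIncidence E α β * (shiftedIncidence E α β)ᴴ =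
      ((r - c) / (r * k) : ℝ) • (1 - (Fintype.card A : ℝ)⁻¹ • of fun _ _ => 1) := by
  have hv : (Fintype.card A : ℝ) ≠ 0 := by positivity
  have hentry (m : ℕ) : α ^ 2 * m - α * β * (r + r) + β ^ 2 * Fintype.card B =
      m / (r * k) - 1 / Fintype.card A := by
    rw [eq_one_div_of_mul_eq_one_left hα, eq_one_div_of_mul_eq_one_left hαβ]
    field_simp
    linear_combination (r : ℝ) * k * hβ
  have hid : (r * k + c : ℝ) = Fintype.card A * c + r := by
    exact_mod_cast h.mul_add_eq_card_mul_add
  ext x y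
  rw [shiftedIncidence_mul_conjTranspose_apply, h.card_blocks_through, h.card_blocks_through,
    hentry, Matrix.smul_apply, Matrix.sub_apply, Matrix.smul_apply, of_apply, smul_eq_mul,
    smul_eq_mul]
  by_cases hxy : x = y
  · subst hxy
    simp only [and_self, h.card_blocks_through, one_apply_eq]
    field_simp
    linear_combination -hid
  · simp only [h.card_blocks_through_pair hxy, one_apply_ne hxy]
    field_simp
    linear_combination -hid

theorem lambdaInc_le [Nontrivial A] (h : IsTwoDesign E r k c) (hr : 0 < r) (hk : 0 < k) :
    lambdaInc A B E ≤ 1 / √k := by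
  obtain ⟨a, a', ha⟩ := exists_pair_ne A
  have hb : 0 < Fintype.card B := by
    have hcard := h.card_mul_eq_card_mul
    refine Nat.pos_of_ne_zero fun hb => ?_
    simp [hb, hr.ne', Fintype.card_ne_zero] at hcard
  have hsq (x : ℝ) (hx : 0 < x) : (1 / √x) ^ 2 * x = 1 := by
    rw [div_pow, Real.sq_sqrt hx.le]
    field_simp
  have hαβ : 1 / √(r * k) * (1 / √(Fintype.card A * Fintype.card B)) *
      (Fintype.card A * r) = 1 := by
    have hcard : (Fintype.card B * k : ℝ) = Fintype.card A * r := by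
      exact_mod_cast h.card_mul_eq_card_mul
    rw [div_mul_div_comm, one_mul, ← Real.sqrt_mul (by positivity),
      show (r * k * (Fintype.card A * Fintype.card B) : ℝ) = (Fintype.card A * r) ^ 2 by
        linear_combination (r * Fintype.card A : ℝ) * hcard,
      Real.sqrt_sq (by positivity), one_div_mul_cancel (by positivity)]
  have hμ : (0 : ℝ) ≤ (r - c) / (r * k) :=
    div_nonneg (sub_nonneg.2 (by exact_mod_cast h.pairCount_le_replication ha)) (by positivity)
  have hnorm := norm_mul_self_le_of_mul_conjTranspose_eq_smul
    isStarProjection_inv_card_smul_allOnes.one_sub hμ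
    (h.shiftedIncidence_mul_conjTranspose hr hk (hsq _ (by positivity)) hαβ
      (hsq _ (by positivity)))
  rw [h.lambdaInc_eq_norm_shiftedIncidence, one_div (√(k : ℝ)), ← Real.sqrt_inv]
  refine Real.le_sqrt_of_sq_le ?_
  calc _ = _ := sq _
    _ ≤ ((r : ℝ) - c) / (r * k) := hnorm
    _ ≤ (r : ℝ) / (r * k) := by gcongr; exact sub_le_self _ (Nat.cast_nonneg c)
    _ = (k : ℝ)⁻¹ := by field_simp

end IsTwoDesign

end Design

section AffineTransitivity

variable {K V P : Type*} [DivisionRing K] [AddCommGroup V] [Module K V] [AddTorsor V P]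

lemma exists_linearEquiv_apply_eq {v w : V} (hv : v ≠ 0) (hw : w ≠ 0) :
    ∃ g : V ≃ₗ[K] V, g v = w := by
  obtain ⟨g, hg⟩ := Submodule.exists_linearEquiv_restrict_eq
    ((LinearEquiv.toSpanNonzeroSingleton K V v hv).symm.trans
      (LinearEquiv.toSpanNonzeroSingleton K V w hw))
  refine ⟨g, (hg ⟨v, Submodule.mem_span_singleton_self v⟩).symm.trans ?_⟩
  change ↑(LinearEquiv.toSpanNonzeroSingleton K V w hw (LinearEquiv.coord K V v hv _)) = w
  rw [LinearEquiv.coord_self, LinearEquiv.toSpanNonzeroSingleton_one]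

lemma exists_affineEquiv_apply_eq_pair {x y x' y' : P} (h : x ≠ y) (h' : x' ≠ y') :
    ∃ e : P ≃ᵃ[K] P, e x = x' ∧ e y = y' := by
  obtain ⟨g, hg⟩ := exists_linearEquiv_apply_eq (K := K) (vsub_ne_zero.2 h.symm)
    (vsub_ne_zero.2 h'.symm)
  refine ⟨((AffineEquiv.vaddConst K x).symm.trans g.toAffineEquiv).trans
    (AffineEquiv.vaddConst K x'), ?_, ?_⟩ <;> simp [hg]

def AffineSubspace.mapEquiv (e : P ≃ᵃ[K] P) : AffineSubspace K P ≃ AffineSubspace K P where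
  toFun s := s.map e
  invFun s := s.map e.symm
  left_inv s := by
    dsimp only
    rw [AffineSubspace.map_symm, AffineSubspace.comap_map_eq_of_injective e.injective]
  right_inv s := by
    dsimp only
    rw [← AffineSubspace.comap_symm, AffineSubspace.comap_map_eq_of_injective e.symm.injective]

end AffineTransitivity

section Cubes

variable {F : Type} [Field F] [Fintype F] {n : ℕ}

abbrev Cube (F : Type) [Field F] [Fintype F] (n : ℕ) : Type :=
  {C : AffineSubspace F (Fin n → F) // IsCube F n C}

lemma isCube_map_iff (e : (Fin n → F) ≃ᵃ[F] (Fin n → F))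
    {C : AffineSubspace F (Fin n → F)} :
    IsCube F n (C.map e) ↔ IsCube F n C := by
  rw [IsCube, IsCube, AffineSubspace.coe_map, Set.image_nonempty, AffineSubspace.map_direction]
  exact and_congr_right' (by rw [e.linear_toAffineMap, LinearEquiv.finrank_map_eq])

def Cube.map (e : (Fin n → F) ≃ᵃ[F] (Fin n → F)) : Cube F n ≃ Cube F n :=
  (AffineSubspace.mapEquiv e).subtypeEquiv fun _ => (isCube_map_iff e).symm

lemma Cube.apply_mem_map_iff (e : (Fin n → F) ≃ᵃ[F] (Fin n → F)) (C : Cube F n)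
    (x : Fin n → F) : e x ∈ (Cube.map e C).1 ↔ x ∈ C.1 :=
  AffineSubspace.mem_map_iff_mem_of_injective e.injective

lemma IsCube.natCard {C : AffineSubspace F (Fin n → F)} (hC : IsCube F n C) :
    Nat.card C = Fintype.card F ^ 3 := by
  obtain ⟨⟨p, hp⟩, hdim⟩ := hC
  have : Nonempty C := ⟨⟨p, hp⟩⟩
  rw [← Nat.card_congr (Equiv.vaddConst (⟨p, hp⟩ : C)), Nat.card_eq_fintype_card,
    Module.card_eq_pow_finrank (K := F), hdim]

lemma exists_cube_mem (hn : 3 ≤ n) (x : Fin n → F) : ∃ C : Cube F n, x ∈ C.1 := by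
  have hli : LinearIndependent F fun i : Fin 3 => Pi.basisFun F (Fin n) (Fin.castLE hn i) :=
    (Pi.basisFun F (Fin n)).linearIndependent.comp _ (Fin.castLE_injective hn)
  refine ⟨⟨AffineSubspace.mk' x (Submodule.span F (Set.range fun i : Fin 3 =>
    Pi.basisFun F (Fin n) (Fin.castLE hn i))), ⟨x, AffineSubspace.self_mem_mk' _ _⟩, ?_⟩,
    AffineSubspace.self_mem_mk' _ _⟩
  rw [AffineSubspace.direction_mk', finrank_span_eq_card hli, Fintype.card_fin]

theorem isTwoDesign_cube {x₀ y₀ : Fin n → F} (h : x₀ ≠ y₀) :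
    IsTwoDesign (fun x (C : Cube F n) => x ∈ C.1) (Nat.card {C : Cube F n // x₀ ∈ C.1})
      (Fintype.card F ^ 3) (Nat.card {C : Cube F n // x₀ ∈ C.1 ∧ y₀ ∈ C.1}) where
  card_blocks_through x := by
    obtain ⟨e, hx⟩ : ∃ e : (Fin n → F) ≃ᵃ[F] (Fin n → F), e x = x₀ :=
      ⟨AffineEquiv.constVAdd F (Fin n → F) (x₀ -ᵥ x), vsub_vadd x₀ x⟩
    exact Nat.card_congr ((Cube.map e).subtypeEquiv fun C => by
      rw [← hx, Cube.apply_mem_map_iff])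
  card_points_on C := C.2.natCard
  card_blocks_through_pair {x y} hxy := by
    obtain ⟨e, hx, hy⟩ := exists_affineEquiv_apply_eq_pair (K := F) hxy h
    exact Nat.card_congr ((Cube.map e).subtypeEquiv fun C => by
      rw [← hx, ← hy, Cube.apply_mem_map_iff, Cube.apply_mem_map_iff])

end Cubes

/-- For `n ≥ 6`, the point–cube incidence graph of `F_q^n` has second largest
normalized singular value at most `2·q^{−3/2}`. -/
theorem point_cube_singular_value {F : Type} [Field F] [Fintype F] {n : ℕ} (hn : 6 ≤ n) :
    lambdaInc (Fin n → F) {C : AffineSubspace F (Fin n → F) // IsCube F n C}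
      (fun x C => x ∈ C.1) ≤ 2 / (Fintype.card F : ℝ) ^ ((3 : ℝ) / 2) := by
  have hne : (0 : Fin n → F) ≠ Pi.basisFun F (Fin n) ⟨0, by omega⟩ := fun h => by
    simpa using congrFun h ⟨0, by omega⟩
  have : Nontrivial (Fin n → F) := ⟨⟨_, _, hne⟩⟩
  have hr : 0 < Nat.card {C : Cube F n // (0 : Fin n → F) ∈ C.1} := by
    obtain ⟨C, hC⟩ := exists_cube_mem (by omega) (0 : Fin n → F)
    exact Nat.card_pos_iff.2 ⟨⟨⟨C, hC⟩⟩, inferInstance⟩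
  calc _ ≤ 1 / √((Fintype.card F ^ 3 : ℕ) : ℝ) :=
        (isTwoDesign_cube hne).lambdaInc_le hr (pow_pos Fintype.card_pos 3)
    _ = 1 / (Fintype.card F : ℝ) ^ ((3 : ℝ) / 2) := by
        rw [Nat.cast_pow, Real.sqrt_eq_rpow, ← Real.rpow_natCast,
          ← Real.rpow_mul (by positivity)]
        norm_num
    _ ≤ _ := by gcongr; norm_num
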